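/- Let m ≥ 2 and let P_m denote the path graph on m vertices. A set S ⊆ V(P_m) is an MEG-set of P_m if and only if S contains both endpoints of the path. Consequently meg(P_m) = 2, and P_m has a unique minimal MEG-set, namely the set of its two endpoints. -/

import Mathlib

open SimpleGraph

/-- `S` is a monitoring edge-geodetic set (MEG-set) of `G`: for every edge `e` of `G`
there are `x, y ∈ S` whose distance in `G − e` differs from their distance in `G`
(including the case that they become disconnected in `G − e`). -/
def IsMEGSet {V : Type*} (G : SimpleGraph V) (S : Set V) : Prop :=
  ∀ e ∈ G.edgeSet, ∃ x ∈ S, ∃ y ∈ S,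
    ¬ (G.deleteEdges {e}).Reachable x y ∨ (G.deleteEdges {e}).dist x y ≠ G.dist x y

/-- The monitoring edge-geodetic number: the minimum cardinality of an MEG-set. -/
noncomputable def meg {V : Type*} [Fintype V] (G : SimpleGraph V) : ℕ :=
  sInf {n | ∃ S : Set V, IsMEGSet G S ∧ S.ncard = n}

/-- The strong product `G ⊠ H` of two simple graphs: `(a,b)` adjacent to `(c,d)` iff
`a = c` and `bd ∈ E(H)`, or `b = d` and `ac ∈ E(G)`, or `ac ∈ E(G)` and `bd ∈ E(H)`. -/
def strongProd {α β : Type*} (G : SimpleGraph α) (H : SimpleGraph β) :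
    SimpleGraph (α × β) where
  Adj x y := (x.1 = y.1 ∧ H.Adj x.2 y.2) ∨ (x.2 = y.2 ∧ G.Adj x.1 y.1) ∨
    (G.Adj x.1 y.1 ∧ H.Adj x.2 y.2)
  symm.symm x y := by
    rintro (⟨h1, h2⟩ | ⟨h1, h2⟩ | ⟨h1, h2⟩)
    · exact Or.inl ⟨h1.symm, h2.symm⟩
    · exact Or.inr (Or.inl ⟨h1.symm, h2.symm⟩)
    · exact Or.inr (Or.inr ⟨h1.symm, h2.symm⟩)
  loopless.irrefl x := by
    rintro (⟨_, h⟩ | ⟨_, h⟩ | ⟨h, _⟩)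
    · exact H.loopless.irrefl _ h
    · exact G.loopless.irrefl _ h
    · exact G.loopless.irrefl _ h

infixl:70 " ⊠ " => strongProd

/-!
Deleting the edge `{i, i+1}` of `P_m` separates `{0, …, i}` from `{i+1, …, m-1}`, while two
vertices on the same side keep their distance, since the monotone path between them survives.
So a pair monitors `{i, i+1}` exactly when the edge separates it: the endpoint pair monitors every
edge, and the edges `{0, 1}` and `{m-2, m-1}` force both endpoints into every MEG-set.
-/

namespace SimpleGraph

variable {V : Type*} {G H : SimpleGraph V}

theorem exists_walk_length_eq_of_adj_succ (f : ℕ → V) :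
    ∀ d, (∀ k < d, G.Adj (f k) (f (k + 1))) → ∃ p : G.Walk (f 0) (f d), p.length = d
  | 0, _ => ⟨.nil, rfl⟩
  | d + 1, hadj => by
    obtain ⟨p, hp⟩ := exists_walk_length_eq_of_adj_succ f d fun k hk => hadj k (by omega)
    exact ⟨p.concat (hadj d d.lt_succ_self), by rw [Walk.length_concat, hp]⟩

theorem dist_eq_of_le_of_walk {x y : V} (hle : H ≤ G) (p : H.Walk x y)
    (hp : p.length ≤ G.dist x y) : H.dist x y = G.dist x y :=
  le_antisymm ((dist_le p).trans hp) (Reachable.dist_anti hle ⟨p⟩)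

def Monitors (G : SimpleGraph V) (e : Sym2 V) (x y : V) : Prop :=
  ¬ (G.deleteEdges {e}).Reachable x y ∨ (G.deleteEdges {e}).dist x y ≠ G.dist x y

theorem Monitors.symm {e : Sym2 V} {x y : V} (h : G.Monitors e x y) : G.Monitors e y x := by
  unfold Monitors at *
  rwa [reachable_comm, dist_comm, dist_comm (G := G)]

theorem isMEGSet_iff_monitors {S : Set V} :
    IsMEGSet G S ↔ ∀ e ∈ G.edgeSet, ∃ x ∈ S, ∃ y ∈ S, G.Monitors e x y :=
  Iff.rfl

theorem meg_eq_ncard_of_isMEGSet_iff [Fintype V] {T : Set V}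
    (h : ∀ S, IsMEGSet G S ↔ T ⊆ S) : meg G = T.ncard := by
  have hT : T.ncard ∈ {n | ∃ S : Set V, IsMEGSet G S ∧ S.ncard = n} :=
    ⟨T, (h T).2 subset_rfl, rfl⟩
  refine le_antisymm (Nat.sInf_le hT) (le_csInf ⟨_, hT⟩ ?_)
  rintro n ⟨S, hS, rfl⟩
  exact Set.ncard_le_ncard ((h S).1 hS)

variable {m : ℕ}

theorem pathGraph_sub_le_length {x y : Fin m} (p : (pathGraph m).Walk x y) :
    y.val - x.val ≤ p.length := by
  induction p with
  | nil => simp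
  | cons h p ih =>
    rw [pathGraph_adj] at h
    rw [Walk.length_cons]
    omega

theorem pathGraph_sub_le_dist (x y : Fin m) : y.val - x.val ≤ (pathGraph m).dist x y := by
  obtain ⟨p, hp⟩ := (pathGraph_preconnected m x y).exists_walk_length_eq_dist
  exact hp ▸ pathGraph_sub_le_length p

theorem pathGraph_deleteEdges_not_reachable {i j x y : Fin m} (hij : i.val + 1 = j.val)
    (hx : x ≤ i) (hy : j ≤ y) : ¬ ((pathGraph m).deleteEdges {s(i, j)}).Reachable x y := by
  rintro ⟨p⟩
  obtain ⟨d, -, hd₁ : d.fst ≤ i, hd₂ : ¬ d.snd ≤ i⟩ :=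
    p.exists_boundary_dart {v | v ≤ i} hx (show ¬ y ≤ i by omega)
  have hadj := d.adj
  rw [deleteEdges_adj, pathGraph_adj, Set.mem_singleton_iff, Sym2.eq_iff] at hadj
  omega

theorem pathGraph_deleteEdges_reachable_and_dist_eq {i j x y : Fin m} (hij : i.val + 1 = j.val)
    (hxy : x ≤ y) (hside : y ≤ i ∨ j ≤ x) :
    ((pathGraph m).deleteEdges {s(i, j)}).Reachable x y ∧
      ((pathGraph m).deleteEdges {s(i, j)}).dist x y = (pathGraph m).dist x y := by
  let f : ℕ → Fin m := fun k => ⟨min (x + k) y, (min_le_right _ _).trans_lt y.isLt⟩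
  obtain ⟨p, hp⟩ := exists_walk_length_eq_of_adj_succ
    (G := (pathGraph m).deleteEdges {s(i, j)}) f (y - x) fun k hk => by
      simp only [f, deleteEdges_adj, pathGraph_adj, Set.mem_singleton_iff, Sym2.eq_iff,
        Fin.ext_iff]
      omega
  let q := p.copy (Fin.ext (show min (x.val + 0) y = x by omega))
    (Fin.ext (show min (x.val + (y - x)) y = y by omega))
  refine ⟨⟨q⟩, dist_eq_of_le_of_walk (deleteEdges_le _) q ?_⟩
  rw [Walk.length_copy, hp]
  exact pathGraph_sub_le_dist x y

theorem pathGraph_monitors_iff {i j x y : Fin m} (hij : i.val + 1 = j.val) :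
    (pathGraph m).Monitors s(i, j) x y ↔ (x ≤ i ∧ j ≤ y) ∨ (y ≤ i ∧ j ≤ x) := by
  constructor
  · intro h
    by_contra hsep
    wlog hxy : x ≤ y generalizing x y
    · exact this h.symm (by tauto) (le_of_not_ge hxy)
    obtain ⟨hr, hd⟩ := pathGraph_deleteEdges_reachable_and_dist_eq hij hxy (by omega)
    exact h.elim (· hr) (· hd)
  · rintro (⟨hx, hy⟩ | ⟨hy, hx⟩)
    · exact Or.inl (pathGraph_deleteEdges_not_reachable hij hx hy)
    · exact Or.inl fun h => pathGraph_deleteEdges_not_reachable hij hy hx h.symm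

theorem pathGraph_monitors_of_val_eq {a b : Fin m} (ha : a.val = 0) (hb : b.val = m - 1)
    {e : Sym2 (Fin m)} (he : e ∈ (pathGraph m).edgeSet) : (pathGraph m).Monitors e a b := by
  induction e using Sym2.ind with
  | h u v =>
    rcases pathGraph_adj.1 he with huv | hvu
    · rw [pathGraph_monitors_iff huv]
      exact Or.inl ⟨by omega, by omega⟩
    · rw [Sym2.eq_swap, pathGraph_monitors_iff hvu]
      exact Or.inl ⟨by omega, by omega⟩

theorem pathGraph_isMEGSet_iff (hm : 2 ≤ m) {a b : Fin m} (ha : a.val = 0) (hb : b.val = m - 1)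
    (S : Set (Fin m)) : IsMEGSet (pathGraph m) S ↔ a ∈ S ∧ b ∈ S := by
  rw [isMEGSet_iff_monitors]
  constructor
  · intro hS
    have hfst : a.val + 1 = (⟨1, hm⟩ : Fin m).val := show a.val + 1 = 1 by omega
    have hlst : (⟨m - 2, by omega⟩ : Fin m).val + 1 = b.val := show m - 2 + 1 = b.val by omega
    obtain ⟨x, hx, y, hy, hfirst⟩ := hS s(_, _) (pathGraph_adj.2 (.inl hfst))
    obtain ⟨x', hx', y', hy', hlast⟩ := hS s(_, _) (pathGraph_adj.2 (.inl hlst))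
    rw [pathGraph_monitors_iff hfst] at hfirst
    rw [pathGraph_monitors_iff hlst] at hlast
    constructor
    · rcases hfirst with ⟨h, -⟩ | ⟨h, -⟩
      · rwa [show x = a from Fin.ext (by omega)] at hx
      · rwa [show y = a from Fin.ext (by omega)] at hy
    · rcases hlast with ⟨-, h⟩ | ⟨-, h⟩
      · rwa [show y' = b from Fin.ext (by omega)] at hy'
      · rwa [show x' = b from Fin.ext (by omega)] at hx'
  · rintro ⟨h₀, h₁⟩ e he
    exact ⟨_, h₀, _, h₁, pathGraph_monitors_of_val_eq ha hb he⟩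

end SimpleGraph

theorem pathGraph_megSets (m : ℕ) (hm : 2 ≤ m) :
    (∀ S : Set (Fin m), IsMEGSet (pathGraph m) S ↔
      (⟨0, by omega⟩ : Fin m) ∈ S ∧ (⟨m - 1, by omega⟩ : Fin m) ∈ S) ∧
    meg (pathGraph m) = 2 ∧
    (IsMEGSet (pathGraph m)
        ({⟨0, by omega⟩, ⟨m - 1, by omega⟩} : Set (Fin m)) ∧
      ∀ R : Set (Fin m), IsMEGSet (pathGraph m) R →
        ({⟨0, by omega⟩, ⟨m - 1, by omega⟩} : Set (Fin m)) ⊆ R) := by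
  have hends : ∀ S : Set (Fin m), IsMEGSet (pathGraph m) S ↔
      (⟨0, by omega⟩ : Fin m) ∈ S ∧ (⟨m - 1, by omega⟩ : Fin m) ∈ S :=
    pathGraph_isMEGSet_iff hm rfl rfl
  have hiff : ∀ S : Set (Fin m), IsMEGSet (pathGraph m) S ↔
      ({⟨0, by omega⟩, ⟨m - 1, by omega⟩} : Set (Fin m)) ⊆ S := fun S => by
    rw [Set.insert_subset_iff, Set.singleton_subset_iff, hends]
  refine ⟨hends, ?_, (hiff _).2 subset_rfl, fun R hR => (hiff R).1 hR⟩
  rw [meg_eq_ncard_of_isMEGSet_iff hiff,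
    Set.ncard_pair (Fin.ne_of_val_ne (show 0 ≠ m - 1 by omega))]
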